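/- arXiv:1808.01817 — 2 statements merged into one kernel-verified Lean document; each statement's English description precedes it below -/
import Mathlib

section
/- For all n ≥ 2, 0 ≤ α ≤ 1, ρ > 0 and x ∈ [0,1], the second central moment is G_{n,ρ}^{(α)}((t−x)²; x) = [x(1−x)(ρ(n + (n − 2α + 2)ρ) − 6) + 2] / ((nρ+2)(nρ+3)). -/
open MeasureTheory Filter Finset Real

/-- Generalized Bernstein basis function `p_{n,k}^{(α)}(x)` (polynomial form). -/
noncomputable def bernP (n k : ℕ) (α x : ℝ) : ℝ :=
  ((n - 2).choose k : ℝ) * (1 - α) * x ^ k * (1 - x) ^ (n - k - 1)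
    + (if 2 ≤ k then (((n - 2).choose (k - 2)) : ℝ) else 0) * (1 - α) * x ^ (k - 1) * (1 - x) ^ (n - k)
    + (n.choose k : ℝ) * α * x ^ k * (1 - x) ^ (n - k)

/-- Euler Beta function. -/
noncomputable def betaR (e f : ℝ) : ℝ := Real.Gamma e * Real.Gamma f / Real.Gamma (e + f)

/-- The Beta density `μ_{n,ρ,k}`. -/
noncomputable def muD (n k : ℕ) (ρ t : ℝ) : ℝ :=
  t ^ ((k : ℝ) * ρ) * (1 - t) ^ (((n : ℝ) - (k : ℝ)) * ρ) /
    betaR ((k : ℝ) * ρ + 1) (((n : ℝ) - (k : ℝ)) * ρ + 1)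

/-- The generalized Bernstein–Durrmeyer operator. -/
noncomputable def G (n : ℕ) (α ρ : ℝ) (f : ℝ → ℝ) (x : ℝ) : ℝ :=
  ∑ k ∈ Finset.range (n + 1), bernP n k α x * ∫ t in (0:ℝ)..1, muD n k ρ t * f t

/-!
Each kernel `muD n k ρ` is the Beta density with parameters `kρ + 1` and `(n - k)ρ + 1`, so its
second moment about `x` is a quadratic polynomial in `k`. For `n = m + 2` the basis function
`bernP n k α x` is the mixture `(1 - α)(1 - x) b_{m,k} + (1 - α) x b_{m,k-2} + α b_{m+2,k}` of
classical Bernstein basis functions, whose factorial moments are classical. Hence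
`∑ₖ bernP n k α x * k ^ j` is `1`, `n x` and `n (n - 1) x² + n x + 2 (1 - α) x (1 - x)` for
`j = 0, 1, 2`, and the theorem is the resulting rational identity.
-/

lemma betaR_add_one_left {a b : ℝ} (ha : 0 < a) (hb : 0 < b) :
    betaR (a + 1) b = a / (a + b) * betaR a b := by
  have hab := add_pos ha hb
  rw [betaR, betaR, add_right_comm, Real.Gamma_add_one ha.ne', Real.Gamma_add_one hab.ne']
  have := (Real.Gamma_pos_of_pos hab).ne'
  field_simp

lemma integral_rpow_mul_one_sub_rpow {a b : ℝ} (ha : -1 < a) (hb : -1 < b) :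
    ∫ t in (0:ℝ)..1, t ^ a * (1 - t) ^ b = betaR (a + 1) (b + 1) := by
  have hcomplex : Complex.betaIntegral ((a + 1 : ℝ) : ℂ) ((b + 1 : ℝ) : ℂ)
      = ((∫ t in (0:ℝ)..1, t ^ a * (1 - t) ^ b : ℝ) : ℂ) := by
    rw [Complex.betaIntegral, ← intervalIntegral.integral_ofReal]
    refine intervalIntegral.integral_congr fun t ht => ?_
    rw [Set.uIcc_of_le zero_le_one] at ht
    simp only [Complex.ofReal_mul, Complex.ofReal_cpow ht.1,
      Complex.ofReal_cpow (sub_nonneg.2 ht.2)]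
    push_cast
    ring_nf
  change _ = ProbabilityTheory.beta _ _
  rw [ProbabilityTheory.beta_eq_betaIntegralReal _ _ (by linarith) (by linarith), hcomplex,
    Complex.ofReal_re]

lemma intervalIntegrable_rpow_mul_one_sub_rpow {a b : ℝ} (ha : 0 ≤ a) (hb : 0 ≤ b) :
    IntervalIntegrable (fun t : ℝ => t ^ a * (1 - t) ^ b) volume 0 1 :=
  ((continuous_rpow_const ha).mul
    ((continuous_rpow_const hb).comp (continuous_const.sub continuous_id))).intervalIntegrable _ _

lemma integral_rpow_mul_one_sub_rpow_mul_sq_sub {a b : ℝ} (ha : 0 ≤ a) (hb : 0 ≤ b) (x : ℝ) :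
    ∫ t in (0:ℝ)..1, t ^ a * (1 - t) ^ b * (t - x) ^ 2
      = betaR (a + 1) (b + 1) * ((a + 1) * (a + 2) / ((a + b + 2) * (a + b + 3))
          - 2 * x * ((a + 1) / (a + b + 2)) + x ^ 2) := by
  have hexpand : Set.EqOn (fun t => t ^ a * (1 - t) ^ b * (t - x) ^ 2)
      (fun t => t ^ (a + 2) * (1 - t) ^ b - 2 * x * (t ^ (a + 1) * (1 - t) ^ b)
        + x ^ 2 * (t ^ a * (1 - t) ^ b)) (Set.uIcc 0 1) := by
    intro t ht
    rw [Set.uIcc_of_le zero_le_one] at ht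
    simp only [rpow_add' ht.1 (by linarith : a + 2 ≠ 0), rpow_add' ht.1 (by linarith : a + 1 ≠ 0),
      rpow_one, rpow_two]
    ring
  have i0 := intervalIntegrable_rpow_mul_one_sub_rpow ha hb
  have i1 := intervalIntegrable_rpow_mul_one_sub_rpow (by linarith : 0 ≤ a + 1) hb
  have i2 := intervalIntegrable_rpow_mul_one_sub_rpow (by linarith : 0 ≤ a + 2) hb
  rw [intervalIntegral.integral_congr hexpand,
    intervalIntegral.integral_add (i2.sub (i1.const_mul _)) (i0.const_mul _),
    intervalIntegral.integral_sub i2 (i1.const_mul _), intervalIntegral.integral_const_mul,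
    intervalIntegral.integral_const_mul]
  simp only [integral_rpow_mul_one_sub_rpow (by linarith : -1 < a + 2) (by linarith : -1 < b),
    integral_rpow_mul_one_sub_rpow (by linarith : -1 < a + 1) (by linarith : -1 < b),
    integral_rpow_mul_one_sub_rpow (by linarith : -1 < a) (by linarith : -1 < b)]
  have hb1 : 0 < b + 1 := by linarith
  rw [show a + 2 + 1 = a + 1 + 1 + 1 by ring, betaR_add_one_left (by linarith) hb1,
    betaR_add_one_left (by linarith) hb1]
  have : a + 1 + 1 + (b + 1) ≠ 0 := by linarith
  have : a + 1 + (b + 1) ≠ 0 := by linarith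
  field_simp
  ring

lemma integral_muD_mul_sq_sub {n k : ℕ} (hk : k ≤ n) {ρ : ℝ} (hρ : 0 ≤ ρ) (x : ℝ) :
    ∫ t in (0:ℝ)..1, muD n k ρ t * (t - x) ^ 2
      = ρ ^ 2 / ((n * ρ + 2) * (n * ρ + 3)) * (k : ℝ) ^ 2
        + (3 * ρ - 2 * x * ρ * (n * ρ + 3)) / ((n * ρ + 2) * (n * ρ + 3)) * (k : ℝ)
        + ((2 - 2 * x * (n * ρ + 3)) / ((n * ρ + 2) * (n * ρ + 3)) + x ^ 2) := by
  have ha : 0 ≤ (k : ℝ) * ρ := by positivity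
  have hb : 0 ≤ ((n : ℝ) - k) * ρ := mul_nonneg (sub_nonneg.2 (by exact_mod_cast hk)) hρ
  have hB : betaR ((k : ℝ) * ρ + 1) (((n : ℝ) - k) * ρ + 1) ≠ 0 :=
    (ProbabilityTheory.beta_pos (by linarith) (by linarith)).ne'
  simp only [muD, div_mul_eq_mul_div, intervalIntegral.integral_div,
    integral_rpow_mul_one_sub_rpow_mul_sq_sub ha hb, mul_div_cancel_left₀ _ hB]
  have : (0:ℝ) ≤ n * ρ := by positivity
  have : (n:ℝ) * ρ + 2 ≠ 0 := by linarith
  have : (n:ℝ) * ρ + 3 ≠ 0 := by linarith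
  rw [show (k : ℝ) * ρ + (n - k) * ρ = n * ρ by ring]
  field_simp
  ring

lemma sum_bernsteinPolynomial_eval_mul_quadratic (m : ℕ) (x A B C : ℝ) (f : ℕ → ℝ)
    (hf : ∀ k ≤ m, f k = A * (k : ℝ) ^ 2 + B * k + C) :
    ∑ k ∈ range (m + 1), (bernsteinPolynomial ℝ m k).eval x * f k
      = A * (m * (m - 1) * x ^ 2 + m * x) + B * (m * x) + C := by
  have h0 := congrArg (Polynomial.eval x) (bernsteinPolynomial.sum ℝ m)
  have h1 := congrArg (Polynomial.eval x) (bernsteinPolynomial.sum_smul ℝ m)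
  have h2 := congrArg (Polynomial.eval x) (bernsteinPolynomial.sum_mul_smul ℝ m)
  simp only [Polynomial.eval_finsetSum, nsmul_eq_mul, Polynomial.eval_mul, Polynomial.eval_natCast,
    Polynomial.eval_one, Polynomial.eval_X, Polynomial.eval_pow] at h0 h1 h2
  have hsplit : ∀ k ∈ range (m + 1), (bernsteinPolynomial ℝ m k).eval x * f k
      = A * (((k * (k - 1) : ℕ) : ℝ) * (bernsteinPolynomial ℝ m k).eval x)
        + (A + B) * ((k : ℝ) * (bernsteinPolynomial ℝ m k).eval x)
        + C * (bernsteinPolynomial ℝ m k).eval x := by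
    intro k hk
    rw [hf k (Nat.lt_succ_iff.1 (mem_range.1 hk))]
    rcases k with _ | k
    · simp only [CharP.cast_eq_zero, mul_zero, zero_mul]
      ring
    · push_cast [Nat.add_sub_cancel]
      ring
  rw [sum_congr rfl hsplit, sum_add_distrib, sum_add_distrib, ← mul_sum, ← mul_sum, ← mul_sum,
    h0, h1, h2]
  rcases m with _ | m
  · simp
  · push_cast [Nat.add_sub_cancel]
    ring

lemma bernP_add_two (m k : ℕ) (α x : ℝ) :
    bernP (m + 2) k α x
      = (1 - α) * (1 - x) * (bernsteinPolynomial ℝ m k).eval x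
        + (1 - α) * x * (if 2 ≤ k then (bernsteinPolynomial ℝ m (k - 2)).eval x else 0)
        + α * (bernsteinPolynomial ℝ (m + 2) k).eval x := by
  simp only [bernP, bernsteinPolynomial, Polynomial.eval_mul, Polynomial.eval_natCast,
    Polynomial.eval_pow, Polynomial.eval_X, Polynomial.eval_sub, Polynomial.eval_one,
    Nat.add_sub_cancel]
  congr 1
  · congr 1
    · rcases le_or_gt k m with hkm | hkm
      · rw [show m + 2 - k - 1 = m - k + 1 by omega]
        ring
      · simp [Nat.choose_eq_zero_of_lt hkm]
    · split_ifs with hk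
      · obtain ⟨i, rfl⟩ : ∃ i, k = i + 2 := ⟨k - 2, by omega⟩
        rw [show i + 2 - 2 = i by omega, show i + 2 - 1 = i + 1 by omega,
          show m + 2 - (i + 2) = m - i by omega]
        ring
      · simp
  · ring

lemma sum_bernP_add_two_mul (m : ℕ) (α x : ℝ) (f : ℕ → ℝ) :
    ∑ k ∈ range (m + 2 + 1), bernP (m + 2) k α x * f k
      = (1 - α) * (1 - x) * ∑ k ∈ range (m + 1), (bernsteinPolynomial ℝ m k).eval x * f k
        + (1 - α) * x * ∑ k ∈ range (m + 1), (bernsteinPolynomial ℝ m k).eval x * f (k + 2)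
        + α * ∑ k ∈ range (m + 2 + 1), (bernsteinPolynomial ℝ (m + 2) k).eval x * f k := by
  simp only [bernP_add_two, add_mul, sum_add_distrib, mul_assoc, ← mul_sum]
  congr 2
  · simp [sum_range_succ, bernsteinPolynomial.eq_zero_of_lt]
  · simp [sum_range_succ']

lemma sum_bernP_mul_quadratic {n : ℕ} (hn : 2 ≤ n) (α x A B C : ℝ) (f : ℕ → ℝ)
    (hf : ∀ k ≤ n, f k = A * (k : ℝ) ^ 2 + B * k + C) :
    ∑ k ∈ range (n + 1), bernP n k α x * f k
      = A * (n * (n - 1) * x ^ 2 + n * x + 2 * (1 - α) * x * (1 - x)) + B * (n * x) + C := by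
  obtain ⟨m, rfl⟩ : ∃ m, n = m + 2 := ⟨n - 2, by omega⟩
  rw [sum_bernP_add_two_mul,
    sum_bernsteinPolynomial_eval_mul_quadratic m x A B C f fun k hk => hf k (by omega),
    sum_bernsteinPolynomial_eval_mul_quadratic m x A (4 * A + B) (4 * A + 2 * B + C) _
      fun k hk => by rw [hf (k + 2) (by omega)]; push_cast; ring,
    sum_bernsteinPolynomial_eval_mul_quadratic (m + 2) x A B C f hf]
  push_cast
  ring

theorem G_central_moment_two_general (n : ℕ) (hn : 2 ≤ n) (α ρ : ℝ)
    (hρ : 0 < ρ) (x : ℝ) :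
    G n α ρ (fun t => (t - x) ^ 2) x =
      (x * (1 - x) * (ρ * ((n : ℝ) + ((n : ℝ) - 2 * α + 2) * ρ) - 6) + 2) /
      (((n : ℝ) * ρ + 2) * ((n : ℝ) * ρ + 3)) := by
  rw [G, sum_bernP_mul_quadratic hn α x _ _ _ _ fun k hk => integral_muD_mul_sq_sub hk hρ.le x]
  have : (0:ℝ) < n * ρ := by positivity
  field_simp
  ring

theorem G_central_moment_two (n : ℕ) (hn : 2 ≤ n) (α ρ : ℝ)
    (hα : α ∈ Set.Icc (0:ℝ) 1) (hρ : 0 < ρ) (x : ℝ) (hx : x ∈ Set.Icc (0:ℝ) 1) :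
    G n α ρ (fun t => (t - x) ^ 2) x =
      (x * (1 - x) * (ρ * ((n : ℝ) + ((n : ℝ) - 2 * α + 2) * ρ) - 6) + 2) /
      (((n : ℝ) * ρ + 2) * ((n : ℝ) * ρ + 3)) :=
  G_central_moment_two_general n hn α ρ hρ x
end

section
/- (Lipschitz-type estimate) Let κ₁ ≥ 0, κ₂ > 0, 0 < σ ≤ 1 and M > 0. Suppose f : [0,1] → ℝ satisfies |f(t) − f(x)| ≤ M |t−x|^σ / (t + κ₁x² + κ₂x)^{σ/2} for all t ∈ [0,1], x ∈ (0,1]. Then for every n ≥ 2, 0 ≤ α ≤ 1, ρ > 0 and x ∈ (0,1], |G_{n,ρ}^{(α)}(f; x) − f(x)| ≤ M (τ(x) / (κ₁x² + κ₂x))^{σ/2}, where τ(x) = G_{n,ρ}^{(α)}((t−x)²; x). -/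
open MeasureTheory Filter Finset Real

lemma betaR_pos {e f : ℝ} (he : 0 < e) (hf : 0 < f) : 0 < betaR e f :=
  div_pos (mul_pos (Real.Gamma_pos_of_pos he) (Real.Gamma_pos_of_pos hf))
    (Real.Gamma_pos_of_pos (by linarith))

lemma beta_integral_eq {a b : ℝ} (ha : 0 ≤ a) (hb : 0 ≤ b) :
    ∫ t in (0:ℝ)..1, t ^ a * (1 - t) ^ b = betaR (a + 1) (b + 1) := by
  have h1 : (0:ℝ) < a + 1 := by linarith
  have h2 : (0:ℝ) < b + 1 := by linarith
  have key := Complex.Gamma_mul_Gamma_eq_betaIntegral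
    (s := ((a + 1 : ℝ) : ℂ)) (t := ((b + 1 : ℝ) : ℂ)) (by simpa using h1) (by simpa using h2)
  have hβ : Complex.betaIntegral ((a + 1 : ℝ) : ℂ) ((b + 1 : ℝ) : ℂ)
      = ((∫ t in (0:ℝ)..1, t ^ a * (1 - t) ^ b : ℝ) : ℂ) := by
    rw [Complex.betaIntegral, ← intervalIntegral.integral_ofReal]
    apply intervalIntegral.integral_congr
    intro t ht
    rw [Set.uIcc_of_le (by norm_num : (0:ℝ) ≤ 1)] at ht
    have h0t : 0 ≤ t := ht.1
    have ht1 : 0 ≤ 1 - t := by linarith [ht.2]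
    have e1 : ((a + 1 : ℝ) : ℂ) - 1 = ((a : ℝ) : ℂ) := by push_cast; ring
    have e2 : ((b + 1 : ℝ) : ℂ) - 1 = ((b : ℝ) : ℂ) := by push_cast; ring
    simp only [e1, e2]
    rw [Complex.ofReal_mul, Complex.ofReal_cpow h0t, Complex.ofReal_cpow ht1,
      Complex.ofReal_sub, Complex.ofReal_one]
  rw [hβ] at key
  have hsum : ((a + 1 : ℝ) : ℂ) + ((b + 1 : ℝ) : ℂ) = ((a + b + 2 : ℝ) : ℂ) := by push_cast; ring
  rw [hsum, Complex.Gamma_ofReal, Complex.Gamma_ofReal, Complex.Gamma_ofReal] at key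
  have key' : Real.Gamma (a + 1) * Real.Gamma (b + 1)
      = Real.Gamma (a + b + 2) * ∫ t in (0:ℝ)..1, t ^ a * (1 - t) ^ b := by
    exact_mod_cast key
  have hG : Real.Gamma (a + b + 2) ≠ 0 := (Real.Gamma_pos_of_pos (by linarith)).ne'
  rw [betaR]
  have : a + 1 + (b + 1) = a + b + 2 := by ring
  rw [this]
  field_simp
  linarith [key']

lemma cast_sub_nonneg {n k : ℕ} (hk : k ≤ n) : (0:ℝ) ≤ (n : ℝ) - (k : ℝ) := by
  have : (k:ℝ) ≤ (n:ℝ) := by exact_mod_cast hk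
  linarith

lemma muD_integral {n k : ℕ} {ρ : ℝ} (hρ : 0 < ρ) (hk : k ≤ n) :
    ∫ t in (0:ℝ)..1, muD n k ρ t = 1 := by
  have ha : (0:ℝ) ≤ (k : ℝ) * ρ := by positivity
  have hb : (0:ℝ) ≤ ((n : ℝ) - (k : ℝ)) * ρ := mul_nonneg (cast_sub_nonneg hk) hρ.le
  have hB : 0 < betaR ((k : ℝ) * ρ + 1) (((n : ℝ) - (k : ℝ)) * ρ + 1) :=
    betaR_pos (by linarith) (by linarith)
  unfold muD
  rw [intervalIntegral.integral_div, beta_integral_eq ha hb, div_self hB.ne']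

lemma muD_nonneg {n k : ℕ} {ρ t : ℝ} (hρ : 0 < ρ) (hk : k ≤ n) (h0 : 0 ≤ t) (h1 : t ≤ 1) :
    0 ≤ muD n k ρ t := by
  have hb : (0:ℝ) ≤ ((n : ℝ) - (k : ℝ)) * ρ := mul_nonneg (cast_sub_nonneg hk) hρ.le
  have hB : 0 < betaR ((k : ℝ) * ρ + 1) (((n : ℝ) - (k : ℝ)) * ρ + 1) :=
    betaR_pos (by positivity) (by linarith)
  unfold muD
  apply div_nonneg _ hB.le
  exact mul_nonneg (Real.rpow_nonneg h0 _) (Real.rpow_nonneg (by linarith) _)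

lemma muD_continuous {n k : ℕ} {ρ : ℝ} (hρ : 0 < ρ) (hk : k ≤ n) : Continuous (muD n k ρ) := by
  unfold muD
  apply Continuous.div_const
  refine (Real.continuous_rpow_const (by positivity)).mul ?_
  exact (Real.continuous_rpow_const (mul_nonneg (cast_sub_nonneg hk) hρ.le)).comp
    (continuous_const.sub continuous_id)

lemma sum_bernstein (m : ℕ) (x : ℝ) :
    ∑ k ∈ Finset.range (m + 1), (m.choose k : ℝ) * x ^ k * (1 - x) ^ (m - k) = 1 := by
  have h : ∑ k ∈ Finset.range (m + 1), x ^ k * (1 - x) ^ (m - k) * (m.choose k : ℝ) = 1 := by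
    rw [← add_pow, show x + (1 - x) = 1 by ring, one_pow]
  calc ∑ k ∈ Finset.range (m + 1), (m.choose k : ℝ) * x ^ k * (1 - x) ^ (m - k)
      = ∑ k ∈ Finset.range (m + 1), x ^ k * (1 - x) ^ (m - k) * (m.choose k : ℝ) :=
        Finset.sum_congr rfl fun k _ => by ring
    _ = 1 := h

lemma bernP_nonneg {n k : ℕ} {α x : ℝ} (hα0 : 0 ≤ α) (hα1 : α ≤ 1) (hx0 : 0 ≤ x)
    (hx1 : x ≤ 1) : 0 ≤ bernP n k α x := by
  have h1 : (0:ℝ) ≤ 1 - α := by linarith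
  have h2 : (0:ℝ) ≤ 1 - x := by linarith
  unfold bernP
  refine add_nonneg (add_nonneg (by positivity) ?_) (by positivity)
  split_ifs <;> positivity

lemma bernP_sum {n : ℕ} (hn : 2 ≤ n) (α x : ℝ) :
    ∑ k ∈ Finset.range (n + 1), bernP n k α x = 1 := by
  obtain ⟨m, rfl⟩ : ∃ m, n = m + 2 := ⟨n - 2, by omega⟩
  simp only [bernP]
  rw [Finset.sum_add_distrib, Finset.sum_add_distrib]
  have hm2 : m + 2 - 2 = m := by omega
  have e1 : ∑ k ∈ Finset.range (m + 2 + 1),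
      ((m + 2 - 2).choose k : ℝ) * (1 - α) * x ^ k * (1 - x) ^ (m + 2 - k - 1)
      = (1 - α) * (1 - x) := by
    rw [Finset.sum_range_succ, Finset.sum_range_succ, hm2]
    rw [Nat.choose_eq_zero_of_lt (by omega : m < m + 1),
      Nat.choose_eq_zero_of_lt (by omega : m < m + 2)]
    simp only [Nat.cast_zero, zero_mul, add_zero]
    have : ∀ k ∈ Finset.range (m + 1), (m.choose k : ℝ) * (1 - α) * x ^ k * (1 - x) ^ (m + 2 - k - 1)
        = ((1 - α) * (1 - x)) * ((m.choose k : ℝ) * x ^ k * (1 - x) ^ (m - k)) := by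
      intro k hk
      rw [Finset.mem_range] at hk
      rw [show m + 2 - k - 1 = (m - k) + 1 by omega, pow_succ]
      ring
    rw [Finset.sum_congr rfl this, ← Finset.mul_sum, sum_bernstein, mul_one]
  have e2 : ∑ k ∈ Finset.range (m + 2 + 1),
      (if 2 ≤ k then (((m + 2 - 2).choose (k - 2)) : ℝ) else 0) * (1 - α) * x ^ (k - 1) * (1 - x) ^ (m + 2 - k)
      = (1 - α) * x := by
    rw [Finset.sum_range_succ', Finset.sum_range_succ']
    rw [if_neg (by omega : ¬ 2 ≤ 0 + 1), if_neg (by omega : ¬ 2 ≤ 0)]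
    simp only [zero_mul, add_zero]
    have : ∀ k ∈ Finset.range (m + 1),
        (if 2 ≤ k + 1 + 1 then (((m + 2 - 2).choose (k + 1 + 1 - 2)) : ℝ) else 0) * (1 - α) * x ^ (k + 1 + 1 - 1) * (1 - x) ^ (m + 2 - (k + 1 + 1))
        = ((1 - α) * x) * ((m.choose k : ℝ) * x ^ k * (1 - x) ^ (m - k)) := by
      intro k hk
      rw [if_pos (by omega), hm2, show k + 1 + 1 - 2 = k by omega,
        show k + 1 + 1 - 1 = k + 1 by omega, show m + 2 - (k + 1 + 1) = m - k by omega, pow_succ]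
      ring
    rw [Finset.sum_congr rfl this, ← Finset.mul_sum, sum_bernstein, mul_one]
  have e3 : ∑ k ∈ Finset.range (m + 2 + 1),
      ((m + 2).choose k : ℝ) * α * x ^ k * (1 - x) ^ (m + 2 - k) = α := by
    have : ∀ k ∈ Finset.range (m + 2 + 1), ((m + 2).choose k : ℝ) * α * x ^ k * (1 - x) ^ (m + 2 - k)
        = α * (((m + 2).choose k : ℝ) * x ^ k * (1 - x) ^ (m + 2 - k)) := fun k _ => by ring
    rw [Finset.sum_congr rfl this, ← Finset.mul_sum, sum_bernstein, mul_one]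
  rw [e1, e2, e3]
  ring

lemma rpow_le_lin {θ a l : ℝ} (hθ0 : 0 < θ) (hθ1 : θ ≤ 1) (ha : 0 ≤ a) (hl : 0 < l) :
    a ^ θ ≤ θ * l ^ (θ - 1) * a + (1 - θ) * l ^ θ := by
  have h := Real.geom_mean_le_arith_mean2_weighted hθ0.le (by linarith : (0:ℝ) ≤ 1 - θ)
    (div_nonneg ha hl.le) zero_le_one (by ring)
  rw [Real.one_rpow, mul_one, mul_one] at h
  have hlθ : 0 < l ^ θ := Real.rpow_pos_of_pos hl θ
  have h2 : (a / l) ^ θ = a ^ θ / l ^ θ := Real.div_rpow ha hl.le θ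
  rw [h2] at h
  have h3 := mul_le_mul_of_nonneg_right h hlθ.le
  rw [div_mul_cancel₀ _ hlθ.ne'] at h3
  calc a ^ θ ≤ (θ * (a / l) + (1 - θ)) * l ^ θ := h3
    _ = θ * (l ^ θ / l) * a + (1 - θ) * l ^ θ := by field_simp
    _ = θ * l ^ (θ - 1) * a + (1 - θ) * l ^ θ := by rw [Real.rpow_sub hl, Real.rpow_one]

lemma f_contOn {κ₁ κ₂ σ M : ℝ} (hκ₁ : 0 ≤ κ₁) (hκ₂ : 0 < κ₂) (hσ : 0 < σ) (hσ1 : σ ≤ 1)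
    (hM : 0 < M) {f : ℝ → ℝ}
    (hf : ∀ t ∈ Set.Icc (0:ℝ) 1, ∀ x ∈ Set.Ioc (0:ℝ) 1,
      |f t - f x| ≤ M * |t - x| ^ σ / (t + κ₁ * x ^ 2 + κ₂ * x) ^ (σ / 2)) :
    ContinuousOn f (Set.Icc 0 1) := by
  intro x0 hx0
  rw [ContinuousWithinAt, ← tendsto_sub_nhds_zero_iff]
  rcases eq_or_lt_of_le hx0.1 with h0 | h0
  · -- x0 = 0
    have hx00 : x0 = 0 := h0.symm
    subst hx00
    have key : ∀ t ∈ Set.Icc (0:ℝ) 1, |f t - f 0| ≤ M / κ₂ ^ (σ/2) * t ^ (σ/2) := by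
      intro t ht
      rcases eq_or_lt_of_le ht.1 with h0t | h0t
      · rw [← h0t]
        simp [Real.zero_rpow (by positivity : σ/2 ≠ 0)]
      · have hb := hf 0 (by norm_num) t ⟨h0t, ht.2⟩
        rw [abs_sub_comm] at hb
        refine hb.trans ?_
        have h1 : |(0:ℝ) - t| ^ σ = t ^ σ := by
          rw [abs_of_nonpos (by linarith), neg_sub, sub_zero]
        rw [h1]
        have hden : (κ₂ * t) ^ (σ/2) ≤ (0 + κ₁ * t ^ 2 + κ₂ * t) ^ (σ/2) :=
          Real.rpow_le_rpow (by positivity) (by nlinarith) (by positivity)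
        have hpos : (0:ℝ) < (κ₂ * t) ^ (σ/2) := Real.rpow_pos_of_pos (by positivity) _
        have ht2 : t ^ σ = t ^ (σ/2) * t ^ (σ/2) := by
          rw [← Real.rpow_add h0t]; ring_nf
        have hk2 : (0:ℝ) < κ₂ ^ (σ/2) := Real.rpow_pos_of_pos hκ₂ _
        have htp : (0:ℝ) < t ^ (σ/2) := Real.rpow_pos_of_pos h0t _
        calc M * t ^ σ / (0 + κ₁ * t ^ 2 + κ₂ * t) ^ (σ/2)
            ≤ M * t ^ σ / (κ₂ * t) ^ (σ/2) :=
              div_le_div_of_nonneg_left (by positivity) hpos hden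
          _ = M / κ₂ ^ (σ/2) * t ^ (σ/2) := by
              rw [Real.mul_rpow hκ₂.le h0t.le, ht2]
              field_simp
    have hg : Tendsto (fun t : ℝ => M / κ₂ ^ (σ/2) * t ^ (σ/2)) (nhdsWithin 0 (Set.Icc 0 1))
        (nhds 0) := by
      have hco : Continuous (fun t : ℝ => M / κ₂ ^ (σ/2) * t ^ (σ/2)) :=
        continuous_const.mul (Real.continuous_rpow_const (by positivity))
      have h2 := (hco.tendsto 0).mono_left
        (nhdsWithin_le_nhds (s := Set.Icc (0:ℝ) 1))
      rw [show M / κ₂ ^ (σ/2) * (0:ℝ) ^ (σ/2) = 0 by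
        rw [Real.zero_rpow (show σ/2 ≠ 0 by positivity)]; ring] at h2
      exact h2
    exact squeeze_zero_norm' (eventually_mem_nhdsWithin.mono
      (fun t ht => by rw [Real.norm_eq_abs]; exact key t ht)) hg
  · -- x0 > 0
    have hc0 : 0 < κ₁ * x0 ^ 2 + κ₂ * x0 := by positivity
    have key : ∀ t ∈ Set.Icc (0:ℝ) 1, |f t - f x0|
        ≤ M / (κ₁ * x0 ^ 2 + κ₂ * x0) ^ (σ/2) * |t - x0| ^ σ := by
      intro t ht
      have hb := hf t ht x0 ⟨h0, hx0.2⟩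
      refine hb.trans ?_
      have hden : (κ₁ * x0 ^ 2 + κ₂ * x0) ^ (σ/2) ≤ (t + κ₁ * x0 ^ 2 + κ₂ * x0) ^ (σ/2) :=
        Real.rpow_le_rpow (by positivity) (by linarith [ht.1]) (by positivity)
      calc M * |t - x0| ^ σ / (t + κ₁ * x0 ^ 2 + κ₂ * x0) ^ (σ/2)
          ≤ M * |t - x0| ^ σ / (κ₁ * x0 ^ 2 + κ₂ * x0) ^ (σ/2) :=
            div_le_div_of_nonneg_left (by positivity) (Real.rpow_pos_of_pos hc0 _) hden
        _ = M / (κ₁ * x0 ^ 2 + κ₂ * x0) ^ (σ/2) * |t - x0| ^ σ := by ring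
    have hg : Tendsto (fun t : ℝ => M / (κ₁ * x0 ^ 2 + κ₂ * x0) ^ (σ/2) * |t - x0| ^ σ)
        (nhdsWithin x0 (Set.Icc 0 1)) (nhds 0) := by
      have hco : Continuous (fun t : ℝ => M / (κ₁ * x0 ^ 2 + κ₂ * x0) ^ (σ/2) * |t - x0| ^ σ) :=
        continuous_const.mul ((Real.continuous_rpow_const hσ.le).comp
          ((continuous_id.sub continuous_const).abs))
      have h2 := (hco.tendsto x0).mono_left
        (nhdsWithin_le_nhds (s := Set.Icc (0:ℝ) 1))
      rw [show M / (κ₁ * x0 ^ 2 + κ₂ * x0) ^ (σ/2) * |x0 - x0| ^ σ = 0 by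
        rw [sub_self, abs_zero, Real.zero_rpow hσ.ne']; ring] at h2
      exact h2
    exact squeeze_zero_norm' (eventually_mem_nhdsWithin.mono
      (fun t ht => by rw [Real.norm_eq_abs]; exact key t ht)) hg

theorem G_lipschitz_type (κ₁ κ₂ σ M : ℝ) (hκ₁ : 0 ≤ κ₁) (hκ₂ : 0 < κ₂)
    (hσ : 0 < σ) (hσ1 : σ ≤ 1) (hM : 0 < M) (f : ℝ → ℝ)
    (hf : ∀ t ∈ Set.Icc (0:ℝ) 1, ∀ x ∈ Set.Ioc (0:ℝ) 1,
      |f t - f x| ≤ M * |t - x| ^ σ / (t + κ₁ * x ^ 2 + κ₂ * x) ^ (σ / 2))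
    (n : ℕ) (hn : 2 ≤ n) (α ρ : ℝ)
    (hα : α ∈ Set.Icc (0:ℝ) 1) (hρ : 0 < ρ) (x : ℝ) (hx : x ∈ Set.Ioc (0:ℝ) 1) :
    |G n α ρ f x - f x| ≤
      M * (G n α ρ (fun t => (t - x) ^ 2) x / (κ₁ * x ^ 2 + κ₂ * x)) ^ (σ / 2) := by
  obtain ⟨hx0, hx1⟩ := hx
  obtain ⟨hα0, hα1⟩ := hα
  have hIcc : Set.uIcc (0:ℝ) 1 = Set.Icc 0 1 := Set.uIcc_of_le (by norm_num)
  have hfc : ContinuousOn f (Set.Icc 0 1) := f_contOn hκ₁ hκ₂ hσ hσ1 hM hf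
  have hc : 0 < κ₁ * x ^ 2 + κ₂ * x := by positivity
  have hcs : 0 < (κ₁ * x ^ 2 + κ₂ * x) ^ (σ / 2) := Real.rpow_pos_of_pos hc _
  have hpn : ∀ k : ℕ, 0 ≤ bernP n k α x := fun k => bernP_nonneg hα0 hα1 hx0.le hx1
  have hμint : ∀ k, k ≤ n → IntervalIntegrable (muD n k ρ) volume 0 1 := fun k hk =>
    (muD_continuous hρ hk).intervalIntegrable 0 1
  have hμf : ∀ k, k ≤ n → IntervalIntegrable (fun t => muD n k ρ t * f t) volume 0 1 := by
    intro k hk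
    apply ContinuousOn.intervalIntegrable
    rw [hIcc]
    exact (muD_continuous hρ hk).continuousOn.mul hfc
  have hμsq : ∀ k, k ≤ n → IntervalIntegrable (fun t => muD n k ρ t * (t - x) ^ 2) volume 0 1 :=
    fun k hk => ((muD_continuous hρ hk).mul
      ((continuous_id.sub continuous_const).pow 2)).intervalIntegrable 0 1
  have ha_nonneg : ∀ k, k ≤ n → 0 ≤ ∫ t in (0:ℝ)..1, muD n k ρ t * (t - x) ^ 2 := fun k hk =>
    intervalIntegral.integral_nonneg (by norm_num) fun t ht =>
      mul_nonneg (muD_nonneg hρ hk ht.1 ht.2) (sq_nonneg _)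
  set τ := G n α ρ (fun t => (t - x) ^ 2) x with hτ
  have hτdef : τ = ∑ k ∈ Finset.range (n + 1),
      bernP n k α x * ∫ t in (0:ℝ)..1, muD n k ρ t * (t - x) ^ 2 := rfl
  have hτ0 : 0 ≤ τ := by
    rw [hτdef]
    refine Finset.sum_nonneg fun k hk => mul_nonneg (hpn k) (ha_nonneg k ?_)
    rw [Finset.mem_range] at hk; omega
  -- key estimate for every ε > 0
  have key : ∀ ε : ℝ, 0 < ε → |G n α ρ f x - f x|
      ≤ M / (κ₁ * x ^ 2 + κ₂ * x) ^ (σ / 2) * (τ + ε) ^ (σ / 2) := by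
    intro ε hε
    have hl : 0 < τ + ε := by linarith
    set l := τ + ε with hldef
    have hk1 : ∀ k ∈ Finset.range (n + 1),
        |(∫ t in (0:ℝ)..1, muD n k ρ t * f t) - f x|
        ≤ M / (κ₁ * x ^ 2 + κ₂ * x) ^ (σ / 2) *
          ((σ / 2) * l ^ (σ / 2 - 1) * (∫ t in (0:ℝ)..1, muD n k ρ t * (t - x) ^ 2)
            + (1 - σ / 2) * l ^ (σ / 2)) := by
      intro k hkr
      have hk : k ≤ n := by rw [Finset.mem_range] at hkr; omega
      have hμ1 : ∫ t in (0:ℝ)..1, muD n k ρ t = 1 := muD_integral hρ hk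
      have step1 : (∫ t in (0:ℝ)..1, muD n k ρ t * f t) - f x
          = ∫ t in (0:ℝ)..1, muD n k ρ t * (f t - f x) := by
        have heq : (fun t => muD n k ρ t * (f t - f x))
            = fun t => muD n k ρ t * f t - f x * muD n k ρ t := by funext t; ring
        rw [heq, intervalIntegral.integral_sub (hμf k hk) ((hμint k hk).const_mul (f x)),
          intervalIntegral.integral_const_mul, hμ1, mul_one]
      rw [step1]
      refine (intervalIntegral.abs_integral_le_integral_abs (by norm_num : (0:ℝ) ≤ 1)).trans ?_
      have hbd : ∀ t ∈ Set.Icc (0:ℝ) 1, |muD n k ρ t * (f t - f x)|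
          ≤ muD n k ρ t * (M / (κ₁ * x ^ 2 + κ₂ * x) ^ (σ / 2) *
            ((σ / 2) * l ^ (σ / 2 - 1) * (t - x) ^ 2 + (1 - σ / 2) * l ^ (σ / 2))) := by
        intro t ht
        have hμn : 0 ≤ muD n k ρ t := muD_nonneg hρ hk ht.1 ht.2
        rw [abs_mul, abs_of_nonneg hμn]
        apply mul_le_mul_of_nonneg_left _ hμn
        have h1 := hf t ht x ⟨hx0, hx1⟩
        refine h1.trans ?_
        have hden : (κ₁ * x ^ 2 + κ₂ * x) ^ (σ / 2) ≤ (t + κ₁ * x ^ 2 + κ₂ * x) ^ (σ / 2) :=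
          Real.rpow_le_rpow hc.le (by linarith [ht.1]) (by positivity)
        have h2 : M * |t - x| ^ σ / (t + κ₁ * x ^ 2 + κ₂ * x) ^ (σ / 2)
            ≤ M * |t - x| ^ σ / (κ₁ * x ^ 2 + κ₂ * x) ^ (σ / 2) :=
          div_le_div_of_nonneg_left (by positivity) hcs hden
        refine h2.trans ?_
        have h3 : |t - x| ^ σ = ((t - x) ^ 2) ^ (σ / 2) := by
          rw [show (t - x) ^ 2 = |t - x| ^ 2 from (sq_abs _).symm,
            ← Real.rpow_natCast |t - x| 2, ← Real.rpow_mul (abs_nonneg _)]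
          congr 1
          push_cast
          ring
        have h4 := rpow_le_lin (θ := σ / 2) (a := (t - x) ^ 2) (l := l)
          (by positivity) (by linarith) (sq_nonneg _) hl
        calc M * |t - x| ^ σ / (κ₁ * x ^ 2 + κ₂ * x) ^ (σ / 2)
            = M / (κ₁ * x ^ 2 + κ₂ * x) ^ (σ / 2) * ((t - x) ^ 2) ^ (σ / 2) := by rw [h3]; ring
          _ ≤ M / (κ₁ * x ^ 2 + κ₂ * x) ^ (σ / 2) *
              ((σ / 2) * l ^ (σ / 2 - 1) * (t - x) ^ 2 + (1 - σ / 2) * l ^ (σ / 2)) :=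
              mul_le_mul_of_nonneg_left h4 (le_of_lt (div_pos hM hcs))
      have hint1 : IntervalIntegrable (fun t => |muD n k ρ t * (f t - f x)|) volume 0 1 := by
        apply IntervalIntegrable.abs
        apply ContinuousOn.intervalIntegrable
        rw [hIcc]
        exact (muD_continuous hρ hk).continuousOn.mul (hfc.sub continuousOn_const)
      have hint2 : IntervalIntegrable (fun t => muD n k ρ t *
          (M / (κ₁ * x ^ 2 + κ₂ * x) ^ (σ / 2) *
          ((σ / 2) * l ^ (σ / 2 - 1) * (t - x) ^ 2 + (1 - σ / 2) * l ^ (σ / 2)))) volume 0 1 :=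
        ((muD_continuous hρ hk).mul (continuous_const.mul
          (((continuous_const.mul ((continuous_id.sub continuous_const).pow 2))).add
            continuous_const))).intervalIntegrable 0 1
      refine (intervalIntegral.integral_mono_on (by norm_num : (0:ℝ) ≤ 1)
        hint1 hint2 hbd).trans ?_
      have hsplit : (fun t => muD n k ρ t * (M / (κ₁ * x ^ 2 + κ₂ * x) ^ (σ / 2) *
          ((σ / 2) * l ^ (σ / 2 - 1) * (t - x) ^ 2 + (1 - σ / 2) * l ^ (σ / 2))))
          = fun t => (M / (κ₁ * x ^ 2 + κ₂ * x) ^ (σ / 2) * ((σ / 2) * l ^ (σ / 2 - 1)))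
              * (muD n k ρ t * (t - x) ^ 2)
            + (M / (κ₁ * x ^ 2 + κ₂ * x) ^ (σ / 2) * ((1 - σ / 2) * l ^ (σ / 2)))
              * muD n k ρ t := by
        funext t; ring
      rw [hsplit, intervalIntegral.integral_add ((hμsq k hk).const_mul _)
        ((hμint k hk).const_mul _), intervalIntegral.integral_const_mul,
        intervalIntegral.integral_const_mul, hμ1]
      exact le_of_eq (by ring)
    have hsum : G n α ρ f x - f x = ∑ k ∈ Finset.range (n + 1),
        bernP n k α x * ((∫ t in (0:ℝ)..1, muD n k ρ t * f t) - f x) := by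
      have h1 : ∀ k ∈ Finset.range (n + 1),
          bernP n k α x * ((∫ t in (0:ℝ)..1, muD n k ρ t * f t) - f x)
          = bernP n k α x * (∫ t in (0:ℝ)..1, muD n k ρ t * f t) - bernP n k α x * f x :=
        fun k _ => by ring
      rw [Finset.sum_congr rfl h1, Finset.sum_sub_distrib, ← Finset.sum_mul, bernP_sum hn,
        one_mul]
      rfl
    rw [hsum]
    refine (Finset.abs_sum_le_sum_abs _ _).trans ?_
    have h2 : ∀ k ∈ Finset.range (n + 1),
        |bernP n k α x * ((∫ t in (0:ℝ)..1, muD n k ρ t * f t) - f x)|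
        ≤ bernP n k α x * (M / (κ₁ * x ^ 2 + κ₂ * x) ^ (σ / 2) *
          ((σ / 2) * l ^ (σ / 2 - 1) * (∫ t in (0:ℝ)..1, muD n k ρ t * (t - x) ^ 2)
            + (1 - σ / 2) * l ^ (σ / 2))) := by
      intro k hkr
      rw [abs_mul, abs_of_nonneg (hpn k)]
      exact mul_le_mul_of_nonneg_left (hk1 k hkr) (hpn k)
    refine (Finset.sum_le_sum h2).trans ?_
    have h3 : ∑ k ∈ Finset.range (n + 1),
        bernP n k α x * (M / (κ₁ * x ^ 2 + κ₂ * x) ^ (σ / 2) *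
          ((σ / 2) * l ^ (σ / 2 - 1) * (∫ t in (0:ℝ)..1, muD n k ρ t * (t - x) ^ 2)
            + (1 - σ / 2) * l ^ (σ / 2)))
        = M / (κ₁ * x ^ 2 + κ₂ * x) ^ (σ / 2) *
          ((σ / 2) * l ^ (σ / 2 - 1) * τ + (1 - σ / 2) * l ^ (σ / 2)) := by
      have h4 : ∀ k ∈ Finset.range (n + 1),
          bernP n k α x * (M / (κ₁ * x ^ 2 + κ₂ * x) ^ (σ / 2) *
          ((σ / 2) * l ^ (σ / 2 - 1) * (∫ t in (0:ℝ)..1, muD n k ρ t * (t - x) ^ 2)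
            + (1 - σ / 2) * l ^ (σ / 2)))
          = (M / (κ₁ * x ^ 2 + κ₂ * x) ^ (σ / 2) * ((σ / 2) * l ^ (σ / 2 - 1)))
              * (bernP n k α x * ∫ t in (0:ℝ)..1, muD n k ρ t * (t - x) ^ 2)
            + (M / (κ₁ * x ^ 2 + κ₂ * x) ^ (σ / 2) * ((1 - σ / 2) * l ^ (σ / 2)))
              * bernP n k α x := fun k _ => by ring
      rw [Finset.sum_congr rfl h4, Finset.sum_add_distrib, ← Finset.mul_sum, ← Finset.mul_sum,
        ← hτdef, bernP_sum hn]
      ring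
    rw [h3]
    apply mul_le_mul_of_nonneg_left _ (le_of_lt (div_pos hM hcs))
    have h5 : l ^ (σ / 2 - 1) * l = l ^ (σ / 2) := by
      rw [← Real.rpow_add_one hl.ne' (σ / 2 - 1)]
      norm_num
    have hτl : τ ≤ l := by rw [hldef]; linarith
    have h6 : (σ / 2) * l ^ (σ / 2 - 1) * τ ≤ (σ / 2) * l ^ (σ / 2) := by
      calc (σ / 2) * l ^ (σ / 2 - 1) * τ ≤ (σ / 2) * l ^ (σ / 2 - 1) * l :=
            mul_le_mul_of_nonneg_left hτl (by positivity)
        _ = (σ / 2) * l ^ (σ / 2) := by rw [← h5]; ring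
    linarith [h6]
  -- pass to the limit ε → 0⁺
  have hlim : Tendsto (fun ε => M / (κ₁ * x ^ 2 + κ₂ * x) ^ (σ / 2) * (τ + ε) ^ (σ / 2))
      (nhdsWithin 0 (Set.Ioi 0))
      (nhds (M / (κ₁ * x ^ 2 + κ₂ * x) ^ (σ / 2) * τ ^ (σ / 2))) := by
    apply Tendsto.const_mul
    have h1 : Tendsto (fun ε : ℝ => τ + ε) (nhdsWithin 0 (Set.Ioi 0)) (nhds τ) := by
      have h : Tendsto (fun ε : ℝ => τ + ε) (nhds 0) (nhds (τ + 0)) :=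
        (continuous_const.add continuous_id).tendsto 0
      rw [add_zero] at h
      exact h.mono_left (nhdsWithin_le_nhds (s := Set.Ioi (0:ℝ)))
    have h2 : ContinuousAt (fun y : ℝ => y ^ (σ / 2)) τ :=
      Real.continuousAt_rpow_const τ _ (Or.inr (by positivity))
    exact h2.tendsto.comp h1
  have hle : |G n α ρ f x - f x| ≤ M / (κ₁ * x ^ 2 + κ₂ * x) ^ (σ / 2) * τ ^ (σ / 2) :=
    ge_of_tendsto hlim (eventually_mem_nhdsWithin.mono fun ε hε => key ε hε)
  have hfin : M * (τ / (κ₁ * x ^ 2 + κ₂ * x)) ^ (σ / 2)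
      = M / (κ₁ * x ^ 2 + κ₂ * x) ^ (σ / 2) * τ ^ (σ / 2) := by
    rw [Real.div_rpow hτ0 hc.le]; ring
  rw [hfin]
  exact hle
end
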